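/- Let n ≥ 2 be an integer. Then for every t ∈ (0, π), 4(2n − 1)·(n·sin t − sin(n t)) ≥ (n + 1)·((2n − 1)·sin t − sin((2n − 1) t)). -/

import Mathlib

/-!
Let `G(t) = (2n-1)(3n-1) sin t - 4(2n-1) sin (n t) + (n+1) sin ((2n-1) t)` be the difference of
the two sides. For `n = 2`, `G(t) = 12 sin t (1 - cos t)^2`. For `n ≥ 3`, if `(2n-1) sin t ≥ 3`
the bounds `|sin| ≤ 1` already give `G(t) ≥ 0`. Otherwise, by Jordan's inequality, `t` or
`π - t` is at most `5 / (2n-1)`. Near `0`, replacing the three sines by their Taylor polynomials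
of degrees `3`, `5` and `7` (for `x ≥ 0` these partial sums alternate around `sin x`, by
repeated integration of `cos x ≤ 1`) bounds `G(t)` below by `t^5 / 5040` times a
quantity that is nonnegative as long as `(2n-1) t ≤ 5`: the terms of degree `1` and `3` cancel.
Near `π`, the reflection `t ↦ π - t` fixes `sin t` and `sin ((2n-1) t)` and changes `sin (n t)`
at most by a sign, and `sin (n (π - t)) ≥ 0` there, so `G(t) ≥ G(π - t) ≥ 0`.
-/

open Real Finset
open scoped Nat

noncomputable def sinTaylor (k : ℕ) (x : ℝ) : ℝ :=
  ∑ i ∈ range k, (-1) ^ i * x ^ (2 * i + 1) / (2 * i + 1)!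

noncomputable def cosTaylor (k : ℕ) (x : ℝ) : ℝ :=
  ∑ i ∈ range k, (-1) ^ i * x ^ (2 * i) / (2 * i)!

theorem hasDerivAt_sinTaylor (k : ℕ) (x : ℝ) :
    HasDerivAt (sinTaylor k) (cosTaylor k x) x := by
  refine HasDerivAt.fun_sum fun i _ => ?_
  refine (((hasDerivAt_pow (2 * i + 1) x).const_mul ((-1 : ℝ) ^ i)).div_const
    ((2 * i + 1)! : ℝ)).congr_deriv ?_
  rw [Nat.factorial_succ]
  push_cast
  field_simp

theorem cosTaylor_succ (k : ℕ) (x : ℝ) :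
    cosTaylor (k + 1) x =
      1 - ∑ i ∈ range k, (-1 : ℝ) ^ i * x ^ (2 * i + 2) / (2 * i + 2)! := by
  rw [cosTaylor, sum_range_succ', sub_eq_neg_add, ← sum_neg_distrib]
  congr 1
  · refine sum_congr rfl fun i _ => ?_
    rw [pow_succ, mul_add, mul_one]
    ring
  · simp

theorem hasDerivAt_cosTaylor_succ (k : ℕ) (x : ℝ) :
    HasDerivAt (cosTaylor (k + 1)) (-sinTaylor k x) x := by
  rw [show cosTaylor (k + 1) = fun y : ℝ =>
      1 - ∑ i ∈ range k, (-1 : ℝ) ^ i * y ^ (2 * i + 2) / (2 * i + 2)!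
    from funext (cosTaylor_succ k)]
  refine ((HasDerivAt.fun_sum (u := range k) fun i _ =>
    ((hasDerivAt_pow (2 * i + 2) x).const_mul ((-1 : ℝ) ^ i)).div_const
      ((2 * i + 2)! : ℝ)).const_sub 1).congr_deriv ?_
  rw [sinTaylor, ← sum_neg_distrib, ← sum_neg_distrib]
  refine sum_congr rfl fun i _ => ?_
  rw [show 2 * i + 2 = (2 * i + 1) + 1 by ring, Nat.factorial_succ]
  push_cast
  field_simp

theorem nonneg_of_hasDerivAt_nonneg {f f' : ℝ → ℝ} (hf : ∀ x, HasDerivAt f (f' x) x)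
    (hf' : ∀ x, 0 ≤ x → 0 ≤ f' x) (h0 : f 0 = 0) {x : ℝ} (hx : 0 ≤ x) : 0 ≤ f x := by
  have hmono : MonotoneOn f (Set.Ici 0) :=
    monotoneOn_of_hasDerivWithinAt_nonneg (convex_Ici 0)
      (fun y _ => (hf y).continuousAt.continuousWithinAt)
      (fun y _ => (hf y).hasDerivWithinAt)
      (fun y hy => hf' y (interior_subset hy))
  simpa [h0] using hmono Set.self_mem_Ici hx hx

theorem neg_one_pow_mul_sin_sub_sinTaylor_nonneg_of_cos {k : ℕ}
    (hcos : ∀ y, 0 ≤ y → 0 ≤ (-1) ^ k * (cos y - cosTaylor k y)) {x : ℝ} (hx : 0 ≤ x) :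
    0 ≤ (-1) ^ k * (sin x - sinTaylor k x) :=
  nonneg_of_hasDerivAt_nonneg
    (fun y => ((hasDerivAt_sin y).sub (hasDerivAt_sinTaylor k y)).const_mul _) hcos
    (by simp [sinTaylor]) hx

theorem neg_one_pow_mul_cos_sub_cosTaylor_nonneg_of_sin {k : ℕ}
    (hsin : ∀ y, 0 ≤ y → 0 ≤ (-1) ^ k * (sin y - sinTaylor k y)) {x : ℝ} (hx : 0 ≤ x) :
    0 ≤ (-1) ^ (k + 1) * (cos x - cosTaylor (k + 1) x) :=
  nonneg_of_hasDerivAt_nonneg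
    (fun y => (((hasDerivAt_cos y).sub (hasDerivAt_cosTaylor_succ k y)).const_mul _).congr_deriv
      (by ring))
    hsin (by simp [cosTaylor_succ]) hx

theorem neg_one_pow_mul_cos_sub_cosTaylor_nonneg (k : ℕ) {x : ℝ} (hx : 0 ≤ x) :
    0 ≤ (-1) ^ (k + 1) * (cos x - cosTaylor (k + 1) x) := by
  induction k generalizing x with
  | zero => simpa [cosTaylor] using cos_le_one x
  | succ k ih =>
    exact neg_one_pow_mul_cos_sub_cosTaylor_nonneg_of_sin
      (fun y hy => neg_one_pow_mul_sin_sub_sinTaylor_nonneg_of_cos (fun _ hz => ih hz) hy) hx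

theorem neg_one_pow_mul_sin_sub_sinTaylor_nonneg (k : ℕ) {x : ℝ} (hx : 0 ≤ x) :
    0 ≤ (-1) ^ (k + 1) * (sin x - sinTaylor (k + 1) x) :=
  neg_one_pow_mul_sin_sub_sinTaylor_nonneg_of_cos
    (fun _ hy => neg_one_pow_mul_cos_sub_cosTaylor_nonneg k hy) hx

theorem sin_le_taylor_quintic {x : ℝ} (hx : 0 ≤ x) : sin x ≤ x - x ^ 3 / 6 + x ^ 5 / 120 := by
  have h := neg_one_pow_mul_sin_sub_sinTaylor_nonneg 2 hx
  norm_num [sinTaylor, sum_range_succ, Nat.factorial] at h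
  linarith

theorem taylor_septic_le_sin {x : ℝ} (hx : 0 ≤ x) :
    x - x ^ 3 / 6 + x ^ 5 / 120 - x ^ 7 / 5040 ≤ sin x := by
  have h := neg_one_pow_mul_sin_sub_sinTaylor_nonneg 3 hx
  norm_num [sinTaylor, sum_range_succ, Nat.factorial] at h
  linarith

noncomputable def bombieriGap (ν t : ℝ) : ℝ :=
  4 * (2 * ν - 1) * (ν * sin t - sin (ν * t)) -
    (ν + 1) * ((2 * ν - 1) * sin t - sin ((2 * ν - 1) * t))

theorem bombieriGap_two (t : ℝ) : bombieriGap 2 t = 12 * sin t * (1 - cos t) ^ 2 := by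
  rw [bombieriGap]
  norm_num [sin_two_mul, sin_three_mul]
  linear_combination (-12 * sin t) * sin_sq_add_cos_sq t

theorem bombieriGap_nonneg_of_three_le_mul_sin {ν t : ℝ} (hν : 1 / 2 ≤ ν)
    (h : 3 ≤ (2 * ν - 1) * sin t) : 0 ≤ bombieriGap ν t := by
  have ha := mul_le_mul_of_nonneg_left (sin_le_one (ν * t)) (by linarith : 0 ≤ 4 * (2 * ν - 1))
  have hb := mul_le_mul_of_nonneg_left (neg_one_le_sin ((2 * ν - 1) * t))
    (by linarith : 0 ≤ ν + 1)
  have hc := mul_le_mul_of_nonneg_left h (by linarith : 0 ≤ 3 * ν - 1)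
  rw [bombieriGap]
  linarith

theorem mul_lt_five_of_mul_sin_lt_three {m x : ℝ} (hm : 0 ≤ m) (hx₀ : 0 ≤ x)
    (hx : x ≤ π / 2) (h : m * sin x < 3) : m * x < 5 := by
  have hjordan := mul_le_mul_of_nonneg_left (mul_le_sin hx₀ hx) hm
  have hπ : π * (m * (2 / π * x)) = 2 * (m * x) := by field_simp
  nlinarith [pi_pos, pi_lt_d2]

theorem bombieriGap_nonneg_of_mul_le_five {ν x : ℝ} (hν : 3 ≤ ν) (hx : 0 ≤ x)
    (h : (2 * ν - 1) * x ≤ 5) : 0 ≤ bombieriGap ν x := by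
  have h1 := mul_le_mul_of_nonneg_left (sin_ge_sub_cube hx)
    (by nlinarith : 0 ≤ (2 * ν - 1) * (3 * ν - 1))
  have h2 := mul_le_mul_of_nonneg_left (sin_le_taylor_quintic (by positivity : 0 ≤ ν * x))
    (by linarith : 0 ≤ 4 * (2 * ν - 1))
  have hX : 0 ≤ (2 * ν - 1) * x := mul_nonneg (by linarith) hx
  have h3 := mul_le_mul_of_nonneg_left (taylor_septic_le_sin hX) (by linarith : 0 ≤ ν + 1)
  have hpoly : 168 * ν ^ 5 ≤ 17 * (ν + 1) * (2 * ν - 1) ^ 4 := by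
    obtain ⟨w, hw, rfl⟩ : ∃ w, 0 ≤ w ∧ ν = w + 3 := ⟨ν - 3, by linarith, by ring⟩
    nlinarith [pow_nonneg hw 2, pow_nonneg hw 3, pow_nonneg hw 4, pow_nonneg hw 5]
  have hsq : ((2 * ν - 1) * x) ^ 2 ≤ 5 ^ 2 := pow_le_pow_left₀ hX h 2
  have hcoeff : 0 ≤ (ν + 1) * (2 * ν - 1) ^ 5 :=
    mul_nonneg (by linarith) (pow_nonneg (by linarith) 5)
  have hbracket : 0 ≤ 42 * ((ν + 1) * (2 * ν - 1) ^ 5 - 4 * (2 * ν - 1) * ν ^ 5)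
      - (ν + 1) * (2 * ν - 1) ^ 5 * ((2 * ν - 1) * x) ^ 2 := by
    nlinarith [mul_le_mul_of_nonneg_left hsq hcoeff,
      mul_le_mul_of_nonneg_left hpoly (by linarith : 0 ≤ 2 * ν - 1)]
  have hrem := mul_nonneg (by positivity : 0 ≤ x ^ 5 / 5040) hbracket
  rw [bombieriGap]
  linear_combination h1 + h2 + h3 + hrem

theorem sin_two_mul_sub_one_mul_pi_sub (n : ℤ) (x : ℝ) :
    sin ((2 * n - 1) * (π - x)) = sin ((2 * n - 1) * x) := by
  have h := sin_int_mul_pi_sub ((2 * n - 1) * x) (2 * n - 1)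
  rw [Odd.neg_one_zpow ⟨n - 1, by ring⟩] at h
  push_cast at h
  rw [mul_sub, h]
  ring

theorem abs_sin_nat_mul_pi_sub (n : ℕ) (x : ℝ) : |sin (n * (π - x))| = |sin (n * x)| := by
  rw [mul_sub, sin_nat_mul_pi_sub]
  simp [abs_mul]

theorem bombieriGap_le_pi_sub {n : ℕ} (hn : 1 ≤ n) {x : ℝ} (hx : 0 ≤ sin (n * x)) :
    bombieriGap n x ≤ bombieriGap n (π - x) := by
  have hodd := sin_two_mul_sub_one_mul_pi_sub n x
  push_cast at hodd
  have hflip : sin (n * (π - x)) ≤ sin (n * x) := by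
    rw [← abs_of_nonneg hx, ← abs_sin_nat_mul_pi_sub]
    exact le_abs_self _
  have hn' : (1 : ℝ) ≤ n := by exact_mod_cast hn
  rw [bombieriGap, bombieriGap, sin_pi_sub, hodd]
  nlinarith

theorem bombieriGap_pi_sub_nonneg_of_mul_le_five {n : ℕ} (hn : 3 ≤ n) {x : ℝ} (hx : 0 ≤ x)
    (h : (2 * n - 1) * x ≤ 5) : 0 ≤ bombieriGap n (π - x) := by
  have hn' : (3 : ℝ) ≤ n := by exact_mod_cast hn
  have hnx : n * x ≤ π := by nlinarith [pi_gt_three]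
  exact (bombieriGap_nonneg_of_mul_le_five hn' hx h).trans
    (bombieriGap_le_pi_sub (by omega) (sin_nonneg_of_nonneg_of_le_pi (by positivity) hnx))

theorem stmt_4 (n : ℕ) (hn : 2 ≤ n) :
    ∀ t ∈ Set.Ioo (0 : ℝ) π,
      4 * (2 * (n : ℝ) - 1) * ((n : ℝ) * Real.sin t - Real.sin ((n : ℝ) * t)) ≥
        ((n : ℝ) + 1) *
          ((2 * (n : ℝ) - 1) * Real.sin t - Real.sin ((2 * (n : ℝ) - 1) * t)) := by
  rintro t ⟨ht₀, htπ⟩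
  rw [ge_iff_le, ← sub_nonneg]
  change 0 ≤ bombieriGap n t
  obtain rfl | hn₃ := hn.eq_or_lt
  · rw [Nat.cast_ofNat, bombieriGap_two]
    have := sin_pos_of_pos_of_lt_pi ht₀ htπ
    positivity
  have hν : (3 : ℝ) ≤ n := by exact_mod_cast hn₃
  by_cases hlarge : 3 ≤ (2 * n - 1) * sin t
  · exact bombieriGap_nonneg_of_three_le_mul_sin (by linarith) hlarge
  rw [not_le] at hlarge
  rcases le_or_gt t (π / 2) with ht | ht
  · exact bombieriGap_nonneg_of_mul_le_five hν ht₀.le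
      (mul_lt_five_of_mul_sin_lt_three (by linarith) ht₀.le ht hlarge).le
  · rw [← sin_pi_sub] at hlarge
    rw [← sub_sub_cancel π t]
    exact bombieriGap_pi_sub_nonneg_of_mul_le_five hn₃ (by linarith)
      (mul_lt_five_of_mul_sin_lt_three (by linarith) (by linarith) (by linarith) hlarge).le
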